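/- arXiv:1907.09856 — 2 statements merged into one kernel-verified Lean document; each statement's English description precedes it below -/
import Mathlib

section
/- Let α⁺, λ⁺, α⁻, λ⁻ > 0, let N be the unique nonnegative integer satisfying N < α⁺ + α⁻ ≤ N + 1, and suppose that neither α⁺ nor α⁺ + α⁻ is an integer. Set α = N + 1 − α⁺ − α⁻ ∈ (0,1) and C₁ = (λ⁺)^{α⁺} (λ⁻)^{α⁻} sin(α⁺π) / (Γ(α⁺ + α⁻ − N) sin((α⁺ + α⁻)π)). Then C₁ ≠ 0 and the N-th derivative of the bilateral Gamma density satisfies f^{(N)}(x) ~ C₁/x^{α} as x ↓ 0; that is, x^{α} · f^{(N)}(x) tends to C₁ as x tends to 0 from the right. -/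
open MeasureTheory Filter Set Topology

/-- The Gamma(α,λ) density: `λ^α t^(α-1) e^(-λt) / Γ(α)` for `t > 0`, and `0` for `t ≤ 0`. -/
noncomputable def gammaDensity (a l t : ℝ) : ℝ :=
  if 0 < t then l ^ a * t ^ (a - 1) * Real.exp (-l * t) / Real.Gamma a else 0

/-- The bilateral Gamma density `f(x) = ∫₀^∞ g_{α⁺,λ⁺}(x + y) g_{α⁻,λ⁻}(y) dy`. -/
noncomputable def bilateralGammaDensity (ap lp am lm : ℝ) (x : ℝ) : ℝ :=
  ∫ y in Ioi (0 : ℝ), gammaDensity ap lp (x + y) * gammaDensity am lm y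

/-- If `0 < a ≤ u ≤ b` then `u ^ t ≤ a ^ t + b ^ t`. -/
lemma rpow_bound {a b u : ℝ} (t : ℝ) (ha : 0 < a) (h1 : a ≤ u) (h2 : u ≤ b) :
    u ^ t ≤ a ^ t + b ^ t := by
  rcases le_or_gt 0 t with ht | ht
  · have : u ^ t ≤ b ^ t := Real.rpow_le_rpow (le_trans ha.le h1) h2 ht
    have h0 : 0 ≤ a ^ t := (Real.rpow_pos_of_pos ha t).le
    linarith
  · have : u ^ t ≤ a ^ t := Real.rpow_le_rpow_of_nonpos ha h1 ht.le
    have h0 : 0 ≤ b ^ t := (Real.rpow_pos_of_pos (lt_of_lt_of_le ha (h1.trans h2)) t).le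
    linarith

/-- `y ↦ y^r * exp (-b*y)` is integrable on `(0,∞)` for `r > -1`, `b > 0`. -/
lemma integrableOn_rpow_exp {r b : ℝ} (hr : -1 < r) (hb : 0 < b) :
    IntegrableOn (fun y : ℝ => y ^ r * Real.exp (-b * y)) (Ioi 0) := by
  have := integrableOn_rpow_mul_exp_neg_mul_rpow hr zero_lt_one hb
  refine this.congr_fun (fun y hy => ?_) measurableSet_Ioi
  beta_reduce
  rw [Real.rpow_one]

lemma contOn_shift_rpow {c : ℝ} (hc : 0 ≤ c) (t : ℝ) :
    ContinuousOn (fun y : ℝ => (c + y) ^ t) (Ioi 0) := by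
  intro y hy
  have : (0:ℝ) < c + y := by have := mem_Ioi.mp hy; linarith
  exact ((Real.continuousAt_rpow_const _ t (Or.inl this.ne')).comp
    ((continuous_const.add continuous_id).continuousAt)).continuousWithinAt

lemma contOn_base {q lm : ℝ} : ContinuousOn (fun y : ℝ => y ^ (q-1) * Real.exp (-lm*y)) (Ioi 0) := by
  have h1 : ContinuousOn (fun y : ℝ => y ^ (q-1)) (Ioi 0) := by
    intro y hy
    exact (Real.continuousAt_rpow_const _ _ (Or.inl (mem_Ioi.mp hy).ne')).continuousWithinAt
  exact h1.mul (Real.continuous_exp.comp (continuous_const.mul continuous_id)).continuousOn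

/-- Integrability of `(c+y)^t * (y^(q-1) * exp (-lm*y))` on `(0,∞)` for `c > 0`. -/
lemma integrableOn_shift {q lm : ℝ} (hq : 0 < q) (hlm : 0 < lm) {c : ℝ} (t : ℝ) (hc : 0 < c) :
    IntegrableOn (fun y : ℝ => (c + y) ^ t * (y ^ (q-1) * Real.exp (-lm*y))) (Ioi 0) := by
  have hcont : ContinuousOn (fun y : ℝ => (c + y) ^ t * (y ^ (q-1) * Real.exp (-lm*y))) (Ioi 0) :=
    (contOn_shift_rpow hc.le t).mul contOn_base
  rw [show Ioi (0:ℝ) = Ioc 0 1 ∪ Ioi 1 from (Ioc_union_Ioi_eq_Ioi zero_le_one).symm]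
  refine IntegrableOn.union ?_ ?_
  · -- on (0,1]: bound by (c^t + (c+1)^t) * y^(q-1) * exp (-lm*y)
    have hint : IntegrableOn (fun y : ℝ => (c ^ t + (c+1) ^ t) * (y ^ (q-1) * Real.exp (-lm*y)))
        (Ioc 0 1) := by
      refine (((integrableOn_rpow_exp (by linarith) hlm).mono_set
        Ioc_subset_Ioi_self).const_mul _)
    refine Integrable.mono' hint
      ((hcont.mono Ioc_subset_Ioi_self).aestronglyMeasurable measurableSet_Ioc) ?_
    filter_upwards [ae_restrict_mem measurableSet_Ioc] with y hy
    have hy0 : 0 < y := hy.1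
    have hbase : (c + y) ^ t ≤ c ^ t + (c + 1) ^ t :=
      rpow_bound t hc (by linarith) (by linarith [hy.2])
    have hpos : 0 ≤ y ^ (q-1) * Real.exp (-lm*y) :=
      mul_nonneg (Real.rpow_nonneg hy0.le _) (Real.exp_pos _).le
    rw [Real.norm_eq_abs, abs_of_nonneg (mul_nonneg (Real.rpow_nonneg (by linarith) _) hpos)]
    exact mul_le_mul_of_nonneg_right hbase hpos
  · -- on (1,∞): bound by C * y^(m+q-1) * exp(-lm y) with m = max t 0
    set m := max t 0 with hm
    have hint : IntegrableOn
        (fun y : ℝ => ((c+1) ^ m + 1) * (y ^ (m + (q-1)) * Real.exp (-lm*y))) (Ioi 1) := by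
      exact ((integrableOn_rpow_exp (by have : 0 ≤ m := le_max_right t 0; linarith) hlm).mono_set
        (Ioi_subset_Ioi zero_le_one)).const_mul _
    refine Integrable.mono' hint
      ((hcont.mono (Ioi_subset_Ioi zero_le_one)).aestronglyMeasurable measurableSet_Ioi) ?_
    filter_upwards [ae_restrict_mem measurableSet_Ioi] with y hy
    have hy1 : (1:ℝ) < y := hy
    have hy0 : (0:ℝ) < y := by linarith
    have hbase : (c + y) ^ t ≤ ((c+1) ^ m + 1) * y ^ m := by
      rcases le_or_gt 0 t with ht | ht
      · have h1 : (c + y) ^ t ≤ ((c+1) * y) ^ t := by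
          refine Real.rpow_le_rpow (by linarith) (by nlinarith) ht
        have h2 : ((c+1) * y) ^ t = (c+1) ^ t * y ^ t :=
          Real.mul_rpow (by linarith) hy0.le
        have h3 : (c+1) ^ t ≤ (c+1) ^ m :=
          Real.rpow_le_rpow_of_exponent_le (by linarith) (le_max_left _ _)
        have h4 : y ^ t ≤ y ^ m := Real.rpow_le_rpow_of_exponent_le hy1.le (le_max_left _ _)
        have h5 : (0:ℝ) < y ^ m := Real.rpow_pos_of_pos hy0 _
        have h6 : (0:ℝ) ≤ (c+1) ^ t := (Real.rpow_pos_of_pos (by linarith) _).le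
        calc (c + y) ^ t ≤ (c+1) ^ t * y ^ t := by rw [← h2]; exact h1
          _ ≤ (c+1) ^ m * y ^ m := by
              exact mul_le_mul h3 h4 (Real.rpow_nonneg hy0.le _) (Real.rpow_nonneg (by linarith) _)
          _ ≤ ((c+1) ^ m + 1) * y ^ m := by nlinarith
      · have h1 : (c + y) ^ t ≤ y ^ t := Real.rpow_le_rpow_of_nonpos hy0 (by linarith) ht.le
        have h2 : y ^ t ≤ y ^ m := Real.rpow_le_rpow_of_exponent_le hy1.le (le_max_left _ _)
        have h5 : (0:ℝ) < y ^ m := Real.rpow_pos_of_pos hy0 _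
        have h6 : (0:ℝ) ≤ (c+1) ^ m := (Real.rpow_pos_of_pos (by linarith) _).le
        nlinarith
    have hpos : 0 ≤ y ^ (q-1) * Real.exp (-lm*y) :=
      mul_nonneg (Real.rpow_nonneg hy0.le _) (Real.exp_pos _).le
    rw [Real.norm_eq_abs, abs_of_nonneg (mul_nonneg (Real.rpow_nonneg (by linarith) _) hpos)]
    calc (c + y) ^ t * (y ^ (q-1) * Real.exp (-lm*y))
        ≤ (((c+1) ^ m + 1) * y ^ m) * (y ^ (q-1) * Real.exp (-lm*y)) :=
          mul_le_mul_of_nonneg_right hbase hpos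
      _ = ((c+1) ^ m + 1) * (y ^ m * y ^ (q-1) * Real.exp (-lm*y)) := by ring
      _ = ((c+1) ^ m + 1) * (y ^ (m + (q-1)) * Real.exp (-lm*y)) := by
          rw [← Real.rpow_add hy0]

noncomputable def Ik (lp q lm : ℝ) (s : ℝ) (x : ℝ) : ℝ :=
  ∫ y in Ioi (0:ℝ), ((x+y) ^ s * Real.exp (-lp*(x+y))) * (y ^ (q-1) * Real.exp (-lm*y))

variable {p lp q lm : ℝ}

lemma contOn_IkIntegrand (hlp : 0 < lp) {x : ℝ} (hx : 0 ≤ x) (s : ℝ) :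
    ContinuousOn (fun y : ℝ => ((x+y) ^ s * Real.exp (-lp*(x+y))) * (y ^ (q-1) * Real.exp (-lm*y)))
      (Ioi 0) := by
  refine ContinuousOn.mul (ContinuousOn.mul (contOn_shift_rpow hx s) ?_) contOn_base
  exact (Real.continuous_exp.comp (continuous_const.mul (continuous_const.add continuous_id))).continuousOn

lemma IkIntegrand_nonneg {x : ℝ} {y : ℝ} (hy : 0 < y) (hx : 0 ≤ x) (s : ℝ) :
    0 ≤ ((x+y) ^ s * Real.exp (-lp*(x+y))) * (y ^ (q-1) * Real.exp (-lm*y)) := by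
  have h1 : (0:ℝ) ≤ (x+y) ^ s := Real.rpow_nonneg (by linarith) s
  positivity

lemma abs_IkIntegrand {x : ℝ} {y : ℝ} (hy : 0 < y) (hx : 0 ≤ x) (hlp : 0 < lp) (s : ℝ) :
    ‖((x+y) ^ s * Real.exp (-lp*(x+y))) * (y ^ (q-1) * Real.exp (-lm*y))‖
      ≤ (x+y) ^ s * (y ^ (q-1) * Real.exp (-lm*y)) := by
  rw [Real.norm_eq_abs, abs_of_nonneg (IkIntegrand_nonneg hy hx s)]
  have hexp : Real.exp (-lp*(x+y)) ≤ 1 := by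
    rw [Real.exp_le_one_iff]; nlinarith
  have h1 : (0:ℝ) ≤ (x+y) ^ s := Real.rpow_nonneg (by linarith) s
  have h2 : (0:ℝ) ≤ y ^ (q-1) * Real.exp (-lm*y) :=
    mul_nonneg (Real.rpow_nonneg hy.le _) (Real.exp_pos _).le
  calc ((x+y) ^ s * Real.exp (-lp*(x+y))) * (y ^ (q-1) * Real.exp (-lm*y))
      ≤ ((x+y) ^ s * 1) * (y ^ (q-1) * Real.exp (-lm*y)) := by
        exact mul_le_mul_of_nonneg_right (mul_le_mul_of_nonneg_left hexp h1) h2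
    _ = (x+y) ^ s * (y ^ (q-1) * Real.exp (-lm*y)) := by ring

lemma integrableOn_IkIntegrand (hq : 0 < q) (hlm : 0 < lm) (hlp : 0 < lp)
    {x : ℝ} (hx : 0 < x) (s : ℝ) :
    IntegrableOn (fun y : ℝ => ((x+y) ^ s * Real.exp (-lp*(x+y))) * (y ^ (q-1) * Real.exp (-lm*y)))
      (Ioi 0) := by
  refine Integrable.mono' (integrableOn_shift hq hlm s hx)
    ((contOn_IkIntegrand hlp hx.le s).aestronglyMeasurable measurableSet_Ioi) ?_
  filter_upwards [ae_restrict_mem measurableSet_Ioi] with y hy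
  exact abs_IkIntegrand hy hx.le hlp s

lemma hasDerivAt_IkIntegrand (s : ℝ) {x y : ℝ} (hy : 0 < y) (hx : 0 < x) :
    HasDerivAt (fun x : ℝ => ((x+y) ^ s * Real.exp (-lp*(x+y))) * (y ^ (q-1) * Real.exp (-lm*y)))
      (((s * (x+y) ^ (s-1) - lp * (x+y) ^ s) * Real.exp (-lp*(x+y)))
        * (y ^ (q-1) * Real.exp (-lm*y))) x := by
  have hxy : (0:ℝ) < x + y := by linarith
  have h1 : HasDerivAt (fun x : ℝ => (x+y) ^ s) (s * (x+y) ^ (s-1)) x := by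
    have := (Real.hasDerivAt_rpow_const (x := x + y) (p := s) (Or.inl hxy.ne')).comp x
      ((hasDerivAt_id x).add_const y)
    simpa [Function.comp_def] using this
  have h2 : HasDerivAt (fun x : ℝ => Real.exp (-lp*(x+y))) (-lp * Real.exp (-lp*(x+y))) x := by
    have hinner : HasDerivAt (fun x : ℝ => -lp*(x+y)) (-lp) x := by
      simpa using ((hasDerivAt_id x).add_const y).const_mul (-lp)
    have := (Real.hasDerivAt_exp (-lp*(x+y))).comp x hinner
    simpa [mul_comm, Function.comp_def] using this
  have := (h1.mul h2).mul_const (y ^ (q-1) * Real.exp (-lm*y))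
  exact this.congr_deriv (by ring)

lemma hasDerivAt_Ik (hq : 0 < q) (hlm : 0 < lm) (hlp : 0 < lp) (s : ℝ) {x₀ : ℝ} (hx : 0 < x₀) :
    HasDerivAt (Ik lp q lm s) (s * Ik lp q lm (s-1) x₀ - lp * Ik lp q lm s x₀) x₀ := by
  set w : ℝ → ℝ := fun y => y ^ (q-1) * Real.exp (-lm*y) with hw
  set F : ℝ → ℝ → ℝ := fun x y => ((x+y) ^ s * Real.exp (-lp*(x+y))) * w y with hF
  set F' : ℝ → ℝ → ℝ := fun x y =>
    ((s * (x+y) ^ (s-1) - lp * (x+y) ^ s) * Real.exp (-lp*(x+y))) * w y with hF'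
  set bound : ℝ → ℝ := fun y =>
    |s| * ((x₀/2+y) ^ (s-1) * w y) + |s| * ((2*x₀+y) ^ (s-1) * w y)
    + lp * ((x₀/2+y) ^ s * w y) + lp * ((2*x₀+y) ^ s * w y) with hbound
  have hx2 : 0 < x₀/2 := by linarith
  have main := hasDerivAt_integral_of_dominated_loc_of_deriv_le (F := F) (F' := F')
    (x₀ := x₀) (s := Metric.ball x₀ (x₀/2)) (bound := bound)
    (μ := volume.restrict (Ioi (0:ℝ))) (Metric.ball_mem_nhds x₀ hx2) ?_ ?_ ?_ ?_ ?_ ?_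
  · have heq : (∫ y in Ioi (0:ℝ), F' x₀ y) = s * Ik lp q lm (s-1) x₀ - lp * Ik lp q lm s x₀ := by
      have e1 : ∀ y ∈ Ioi (0:ℝ), F' x₀ y
          = s * (((x₀+y) ^ (s-1) * Real.exp (-lp*(x₀+y))) * w y)
            - lp * (((x₀+y) ^ s * Real.exp (-lp*(x₀+y))) * w y) := by
        intro y hy; simp only [hF']; ring
      rw [setIntegral_congr_fun measurableSet_Ioi e1]
      rw [integral_sub, integral_const_mul, integral_const_mul]
      · rfl
      · exact ((integrableOn_IkIntegrand hq hlm hlp hx (s-1)).const_mul s)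
      · exact ((integrableOn_IkIntegrand hq hlm hlp hx s).const_mul lp)
    rw [← heq]
    exact main.2
  · filter_upwards [Ioi_mem_nhds hx] with x hxx
    exact ((contOn_IkIntegrand hlp (le_of_lt hxx) s).aestronglyMeasurable measurableSet_Ioi)
  · exact integrableOn_IkIntegrand hq hlm hlp hx s
  · -- measurability of F' x₀
    refine ContinuousOn.aestronglyMeasurable ?_ measurableSet_Ioi
    refine ContinuousOn.mul (ContinuousOn.mul ?_ ?_) contOn_base
    · exact ((contOn_shift_rpow hx.le (s-1)).const_smul s).sub
        ((contOn_shift_rpow hx.le s).const_smul lp)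
    · exact (Real.continuous_exp.comp
        (continuous_const.mul (continuous_const.add continuous_id))).continuousOn
  · -- bound
    filter_upwards [ae_restrict_mem measurableSet_Ioi] with y hy
    intro x hxball
    have hy0 : (0:ℝ) < y := hy
    rw [Metric.mem_ball, Real.dist_eq, abs_lt] at hxball
    have hxl : x₀/2 < x := by linarith [hxball.1]
    have hxu : x < 3*x₀/2 := by linarith [hxball.2]
    have hb1 : x₀/2 + y ≤ x + y := by linarith
    have hb2 : x + y ≤ 2*x₀ + y := by linarith
    have ha : (0:ℝ) < x₀/2 + y := by linarith
    have hr1 : (x+y) ^ (s-1) ≤ (x₀/2+y) ^ (s-1) + (2*x₀+y) ^ (s-1) := rpow_bound _ ha hb1 hb2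
    have hr2 : (x+y) ^ s ≤ (x₀/2+y) ^ s + (2*x₀+y) ^ s := rpow_bound _ ha hb1 hb2
    have hw0 : 0 ≤ w y := mul_nonneg (Real.rpow_nonneg hy0.le _) (Real.exp_pos _).le
    have hexp : Real.exp (-lp*(x+y)) ≤ 1 := by
      rw [Real.exp_le_one_iff]; nlinarith
    have habs : |(s * (x+y) ^ (s-1) - lp * (x+y) ^ s) * Real.exp (-lp*(x+y))|
        ≤ |s| * (x+y) ^ (s-1) + lp * (x+y) ^ s := by
      have h1 : (0:ℝ) ≤ (x+y) ^ (s-1) := Real.rpow_nonneg (by linarith) _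
      have h2 : (0:ℝ) ≤ (x+y) ^ s := Real.rpow_nonneg (by linarith) _
      have e0 : (0:ℝ) < Real.exp (-lp*(x+y)) := Real.exp_pos _
      rw [abs_mul, abs_of_pos e0]
      calc |s * (x+y) ^ (s-1) - lp * (x+y) ^ s| * Real.exp (-lp*(x+y))
          ≤ (|s * (x+y) ^ (s-1)| + |lp * (x+y) ^ s|) * 1 := by
            refine mul_le_mul (abs_sub _ _) hexp e0.le (by positivity)
        _ = |s| * (x+y) ^ (s-1) + lp * (x+y) ^ s := by
            rw [mul_one, abs_mul, abs_mul, abs_of_nonneg h1, abs_of_nonneg h2,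
              abs_of_pos (by assumption : (0:ℝ) < lp)]
    calc ‖F' x y‖ = |(s * (x+y) ^ (s-1) - lp * (x+y) ^ s) * Real.exp (-lp*(x+y))| * w y := by
          rw [hF']; rw [Real.norm_eq_abs, abs_mul, abs_of_nonneg hw0]
      _ ≤ (|s| * (x+y) ^ (s-1) + lp * (x+y) ^ s) * w y := mul_le_mul_of_nonneg_right habs hw0
      _ ≤ (|s| * ((x₀/2+y) ^ (s-1) + (2*x₀+y) ^ (s-1)) + lp * ((x₀/2+y) ^ s + (2*x₀+y) ^ s)) * w y := by
          refine mul_le_mul_of_nonneg_right (add_le_add ?_ ?_) hw0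
          · exact mul_le_mul_of_nonneg_left hr1 (abs_nonneg s)
          · exact mul_le_mul_of_nonneg_left hr2 hlp.le
      _ = bound y := by rw [hbound]; ring
  · -- bound integrable
    have i1 := integrableOn_shift hq hlm (c := x₀/2) (s-1) hx2
    have i2 := integrableOn_shift hq hlm (c := 2*x₀) (s-1) (by linarith)
    have i3 := integrableOn_shift hq hlm (c := x₀/2) s hx2
    have i4 := integrableOn_shift hq hlm (c := 2*x₀) s (by linarith)
    exact (((i1.const_mul |s|).add (i2.const_mul |s|)).add (i3.const_mul lp)).add (i4.const_mul lp)
  · -- differentiability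
    filter_upwards [ae_restrict_mem measurableSet_Ioi] with y hy
    intro x hxball
    rw [Metric.mem_ball, Real.dist_eq, abs_lt] at hxball
    have hx0 : (0:ℝ) < x := by linarith [hxball.1]
    exact hasDerivAt_IkIntegrand s hy hx0

noncomputable def cf (p lp : ℝ) : ℕ → ℕ → ℝ
  | 0, 0 => 1
  | 0, _+1 => 0
  | n+1, 0 => -lp * cf p lp n 0
  | n+1, k+1 => cf p lp n k * (p-1-k) - lp * cf p lp n (k+1)

lemma cf_eq_zero (p lp : ℝ) : ∀ n k : ℕ, n < k → cf p lp n k = 0 := by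
  intro n
  induction n with
  | zero => intro k hk; match k, hk with
    | k+1, _ => rfl
  | succ n ih =>
    intro k hk
    match k, hk with
    | k+1, hk =>
      have h1 : n < k := by omega
      have h2 : n < k+1 := by omega
      show cf p lp n k * (p-1-k) - lp * cf p lp n (k+1) = 0
      rw [ih k h1, ih (k+1) h2]; ring

lemma cf_diag (p lp : ℝ) : ∀ n : ℕ, cf p lp n n = ∏ j ∈ Finset.range n, (p-1-j) := by
  intro n
  induction n with
  | zero => simp [cf]
  | succ n ih =>
    show cf p lp n n * (p-1-n) - lp * cf p lp n (n+1) = _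
    rw [ih, cf_eq_zero p lp n (n+1) (by omega), Finset.prod_range_succ]; ring

noncomputable def Sk (p lp q lm : ℝ) (n : ℕ) (x : ℝ) : ℝ :=
  ∑ k ∈ Finset.range (n+1), cf p lp n k * Ik lp q lm (p-1-k) x


lemma hasDerivAt_Sk (hq : 0 < q) (hlm : 0 < lm) (hlp : 0 < lp) (n : ℕ) {x₀ : ℝ} (hx : 0 < x₀) :
    HasDerivAt (Sk p lp q lm n) (Sk p lp q lm (n+1) x₀) x₀ := by
  set J : ℕ → ℝ := fun k => Ik lp q lm (p-1-k) x₀ with hJ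
  have hterm : ∀ k ∈ Finset.range (n+1),
      HasDerivAt (fun x => cf p lp n k * Ik lp q lm (p-1-k) x)
        (cf p lp n k * ((p-1-k) * J (k+1) - lp * J k)) x₀ := by
    intro k _
    have h := (hasDerivAt_Ik hq hlm hlp (p-1-k) hx).const_mul (cf p lp n k)
    refine h.congr_deriv ?_
    rw [hJ]; simp only [Nat.cast_succ]; ring_nf
  have hsum := HasDerivAt.fun_sum hterm
  have key : (∑ k ∈ Finset.range (n+1), cf p lp n k * ((p-1-k) * J (k+1) - lp * J k))
      = Sk p lp q lm (n+1) x₀ := by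
    have rhs : Sk p lp q lm (n+1) x₀
        = (∑ i ∈ Finset.range (n+1), cf p lp (n+1) (i+1) * J (i+1)) + cf p lp (n+1) 0 * J 0 := by
      rw [Sk, Finset.sum_range_succ']
    have e0 : cf p lp (n+1) 0 = -lp * cf p lp n 0 := rfl
    have e1 : ∀ i : ℕ, cf p lp (n+1) (i+1) = cf p lp n i * (p-1-i) - lp * cf p lp n (i+1) :=
      fun i => rfl
    rw [rhs, e0]
    have : (∑ i ∈ Finset.range (n+1), cf p lp (n+1) (i+1) * J (i+1))
        = (∑ i ∈ Finset.range (n+1), cf p lp n i * (p-1-i) * J (i+1))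
          - lp * ∑ i ∈ Finset.range (n+1), cf p lp n (i+1) * J (i+1) := by
      rw [Finset.mul_sum, ← Finset.sum_sub_distrib]
      refine Finset.sum_congr rfl (fun i _ => ?_)
      rw [e1]; ring
    rw [this]
    have h2 : (∑ i ∈ Finset.range (n+1), cf p lp n (i+1) * J (i+1))
        = ∑ i ∈ Finset.range n, cf p lp n (i+1) * J (i+1) := by
      rw [Finset.sum_range_succ, cf_eq_zero p lp n (n+1) (by omega)]
      ring
    have h3 : (∑ k ∈ Finset.range (n+1), cf p lp n k * J k)
        = (∑ i ∈ Finset.range n, cf p lp n (i+1) * J (i+1)) + cf p lp n 0 * J 0 := by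
      rw [Finset.sum_range_succ']
    have lhs : (∑ k ∈ Finset.range (n+1), cf p lp n k * ((p-1-k) * J (k+1) - lp * J k))
        = (∑ k ∈ Finset.range (n+1), cf p lp n k * (p-1-k) * J (k+1))
          - lp * ∑ k ∈ Finset.range (n+1), cf p lp n k * J k := by
      rw [Finset.mul_sum, ← Finset.sum_sub_distrib]
      refine Finset.sum_congr rfl (fun k _ => ?_)
      ring
    rw [lhs, h2, h3]
    ring
  rw [← key]
  exact hsum

lemma f_eq (hp : 0 < p) (hq : 0 < q) {x : ℝ} (hx : 0 < x) :
    bilateralGammaDensity p lp q lm x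
      = (lp ^ p * lm ^ q / (Real.Gamma p * Real.Gamma q)) * Ik lp q lm (p-1) x := by
  rw [bilateralGammaDensity, Ik, ← integral_const_mul]
  refine setIntegral_congr_fun measurableSet_Ioi (fun y hy => ?_)
  have hy0 : (0:ℝ) < y := hy
  have hxy : (0:ℝ) < x + y := by linarith
  rw [gammaDensity, gammaDensity, if_pos hxy, if_pos hy0]
  have hΓp : Real.Gamma p ≠ 0 := (Real.Gamma_pos_of_pos hp).ne'
  have hΓq : Real.Gamma q ≠ 0 := (Real.Gamma_pos_of_pos hq).ne'
  field_simp

lemma iteratedDeriv_f_eq (hp : 0 < p) (hq : 0 < q) (hlm : 0 < lm) (hlp : 0 < lp) (n : ℕ) :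
    ∀ x : ℝ, 0 < x → iteratedDeriv n (bilateralGammaDensity p lp q lm) x
      = (lp ^ p * lm ^ q / (Real.Gamma p * Real.Gamma q)) * Sk p lp q lm n x := by
  induction n with
  | zero =>
    intro x hx
    rw [iteratedDeriv_zero, f_eq hp hq hx, Sk]
    simp [cf]
  | succ n ih =>
    intro x hx
    rw [iteratedDeriv_succ]
    have hev : iteratedDeriv n (bilateralGammaDensity p lp q lm)
        =ᶠ[𝓝 x] fun z => (lp ^ p * lm ^ q / (Real.Gamma p * Real.Gamma q)) * Sk p lp q lm n z := by
      filter_upwards [Ioi_mem_nhds hx] with z hz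
      exact ih z hz
    rw [hev.deriv_eq]
    exact (((hasDerivAt_Sk hq hlm hlp n hx).const_mul _)).deriv

/-- Vanishing terms: `x^α * Ik s x → 0` when `0 < s + q` and `0 < α`. -/
lemma tendsto_rpow_mul_Ik_zero (hq : 0 < q) (hlm : 0 < lm) (hlp : 0 < lp)
    {s α : ℝ} (hsq : 0 < s + q) (hα : 0 < α) :
    Tendsto (fun x : ℝ => x ^ α * Ik lp q lm s x) (𝓝[>] (0:ℝ)) (𝓝 0) := by
  -- the uniform bound M
  set M : ℝ := ∫ y in Ioi (0:ℝ),
    (y ^ s * (y ^ (q-1) * Real.exp (-lm*y)) + (1+y) ^ s * (y ^ (q-1) * Real.exp (-lm*y))) with hM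
  have hint1 : IntegrableOn (fun y : ℝ => y ^ s * (y ^ (q-1) * Real.exp (-lm*y))) (Ioi 0) := by
    refine (integrableOn_rpow_exp (r := s + (q-1)) (by linarith) hlm).congr_fun
      (fun y hy => ?_) measurableSet_Ioi
    beta_reduce
    rw [Real.rpow_add hy]; ring
  have hint2 : IntegrableOn (fun y : ℝ => (1+y) ^ s * (y ^ (q-1) * Real.exp (-lm*y))) (Ioi 0) :=
    integrableOn_shift hq hlm s one_pos
  have hIk_nonneg : ∀ x : ℝ, 0 < x → 0 ≤ Ik lp q lm s x := by
    intro x hx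
    exact setIntegral_nonneg measurableSet_Ioi (fun y hy => IkIntegrand_nonneg hy hx.le s)
  have hIk_le : ∀ x : ℝ, 0 < x → x ≤ 1 → Ik lp q lm s x ≤ M := by
    intro x hx hx1
    refine integral_mono_of_nonneg ?_ (hint1.add hint2) ?_
    · filter_upwards [ae_restrict_mem measurableSet_Ioi] with y hy
      exact IkIntegrand_nonneg hy hx.le s
    · filter_upwards [ae_restrict_mem measurableSet_Ioi] with y hy
      have hy0 : (0:ℝ) < y := hy
      have h1 := abs_IkIntegrand (lp := lp) (q := q) (lm := lm) hy0 hx.le hlp s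
      have h2 : (x+y) ^ s ≤ y ^ s + (1+y) ^ s := rpow_bound s hy0 (by linarith) (by linarith)
      have hw0 : 0 ≤ y ^ (q-1) * Real.exp (-lm*y) :=
        mul_nonneg (Real.rpow_nonneg hy0.le _) (Real.exp_pos _).le
      have := (le_abs_self _).trans h1
      calc ((x+y) ^ s * Real.exp (-lp*(x+y))) * (y ^ (q-1) * Real.exp (-lm*y))
          ≤ (x+y) ^ s * (y ^ (q-1) * Real.exp (-lm*y)) := this
        _ ≤ (y ^ s + (1+y) ^ s) * (y ^ (q-1) * Real.exp (-lm*y)) :=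
            mul_le_mul_of_nonneg_right h2 hw0
        _ = y ^ s * (y ^ (q-1) * Real.exp (-lm*y)) + (1+y) ^ s * (y ^ (q-1) * Real.exp (-lm*y)) := by
            ring
  have hpow : Tendsto (fun x : ℝ => x ^ α) (𝓝[>] (0:ℝ)) (𝓝 0) := by
    have := (Real.continuousAt_rpow_const 0 α (Or.inr hα.le)).tendsto
    rw [Real.zero_rpow hα.ne'] at this
    exact this.mono_left nhdsWithin_le_nhds
  have hub : Tendsto (fun x : ℝ => x ^ α * M) (𝓝[>] (0:ℝ)) (𝓝 0) := by
    simpa using hpow.mul_const M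
  refine squeeze_zero' ?_ ?_ hub
  · filter_upwards [self_mem_nhdsWithin] with x hx
    exact mul_nonneg (Real.rpow_nonneg (le_of_lt hx) α) (hIk_nonneg x hx)
  · filter_upwards [Ioc_mem_nhdsGT_of_mem (by constructor <;> norm_num : (0:ℝ) ∈ Ico 0 1)]
      with x hx
    exact mul_le_mul_of_nonneg_left (hIk_le x hx.1 hx.2) (Real.rpow_nonneg hx.1.le α)

/-- Main term: scaling identity. -/
lemma rpow_mul_Ik_eq (hq : 0 < q) {s α x : ℝ} (hx : 0 < x) (hsα : s + q = -α) :
    x ^ α * Ik lp q lm s x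
      = ∫ u in Ioi (0:ℝ), ((1+u) ^ s * u ^ (q-1)) * Real.exp (-((lp*(1+u)+lm*u)*x)) := by
  have hcv := integral_comp_mul_left_Ioi
    (fun y : ℝ => ((x+y) ^ s * Real.exp (-lp*(x+y))) * (y ^ (q-1) * Real.exp (-lm*y)))
    0 hx
  rw [mul_zero] at hcv
  -- hcv : ∫ u in Ioi 0, F (x*u) = x⁻¹ • Ik s x
  have hIk : Ik lp q lm s x = x * ∫ u in Ioi (0:ℝ),
      ((x+x*u) ^ s * Real.exp (-lp*(x+x*u))) * ((x*u) ^ (q-1) * Real.exp (-lm*(x*u))) := by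
    rw [hcv, smul_eq_mul, ← mul_assoc, mul_inv_cancel₀ hx.ne', one_mul]; rfl
  rw [hIk, ← mul_assoc, ← integral_const_mul]
  refine setIntegral_congr_fun measurableSet_Ioi (fun u hu => ?_)
  have hu0 : (0:ℝ) < u := hu
  have h1u : (0:ℝ) < 1 + u := by linarith
  have e1 : x + x*u = x*(1+u) := by ring
  rw [e1, Real.mul_rpow hx.le h1u.le, Real.mul_rpow hx.le hu0.le]
  have e2 : Real.exp (-lp*(x*(1+u))) * Real.exp (-lm*(x*u))
      = Real.exp (-((lp*(1+u)+lm*u)*x)) := by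
    rw [← Real.exp_add]; ring_nf
  have e3 : x ^ α * x * (x ^ s * x ^ (q-1)) = 1 := by
    have h : x ^ α * x ^ (1:ℝ) * (x ^ s * x ^ (q-1)) = 1 := by
      rw [← Real.rpow_add hx α 1, ← Real.rpow_add hx s (q-1),
        ← Real.rpow_add hx (α+1) (s+(q-1)),
        show α + 1 + (s + (q-1)) = 0 by linarith, Real.rpow_zero]
    rwa [Real.rpow_one] at h
  calc x ^ α * x * ((x ^ s * (1+u) ^ s * Real.exp (-lp*(x*(1+u))))
        * (x ^ (q-1) * u ^ (q-1) * Real.exp (-lm*(x*u))))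
      = (x ^ α * x * (x ^ s * x ^ (q-1))) * (((1+u) ^ s * u ^ (q-1))
        * (Real.exp (-lp*(x*(1+u))) * Real.exp (-lm*(x*u)))) := by ring
    _ = ((1+u) ^ s * u ^ (q-1)) * Real.exp (-((lp*(1+u)+lm*u)*x)) := by
        rw [e3, e2, one_mul]

/-- Integrability of the beta-type integrand. -/
lemma integrableOn_beta (hq : 0 < q) {s α : ℝ} (hα : 0 < α) (hsα : s + q = -α) :
    IntegrableOn (fun u : ℝ => (1+u) ^ s * u ^ (q-1)) (Ioi 0) := by
  have hs0 : s < 0 := by linarith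
  have hcont : ContinuousOn (fun u : ℝ => (1+u) ^ s * u ^ (q-1)) (Ioi 0) := by
    refine (contOn_shift_rpow zero_le_one s).mul ?_
    intro y hy
    exact (Real.continuousAt_rpow_const _ _ (Or.inl (mem_Ioi.mp hy).ne')).continuousWithinAt
  rw [show Ioi (0:ℝ) = Ioc 0 1 ∪ Ioi 1 from (Ioc_union_Ioi_eq_Ioi zero_le_one).symm]
  refine IntegrableOn.union ?_ ?_
  · refine Integrable.mono' ((intervalIntegral.intervalIntegrable_rpow'
      (by linarith : (-1:ℝ) < q-1)).1)
      ((hcont.mono Ioc_subset_Ioi_self).aestronglyMeasurable measurableSet_Ioc) ?_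
    filter_upwards [ae_restrict_mem measurableSet_Ioc] with u hu
    have hu0 : (0:ℝ) < u := hu.1
    have h1 : (1+u) ^ s ≤ 1 := Real.rpow_le_one_of_one_le_of_nonpos (by linarith) hs0.le
    have h2 : (0:ℝ) ≤ (1+u) ^ s := Real.rpow_nonneg (by linarith) s
    have h3 : (0:ℝ) ≤ u ^ (q-1) := Real.rpow_nonneg hu0.le _
    rw [Real.norm_eq_abs, abs_of_nonneg (mul_nonneg h2 h3)]
    nlinarith
  · refine Integrable.mono' ((integrableOn_Ioi_rpow_of_lt (by linarith : s + (q-1) < -1)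
      one_pos))
      ((hcont.mono (Ioi_subset_Ioi zero_le_one)).aestronglyMeasurable measurableSet_Ioi) ?_
    filter_upwards [ae_restrict_mem measurableSet_Ioi] with u hu
    have hu1 : (1:ℝ) < u := hu
    have hu0 : (0:ℝ) < u := by linarith
    have h1 : (1+u) ^ s ≤ u ^ s := Real.rpow_le_rpow_of_nonpos hu0 (by linarith) hs0.le
    have h3 : (0:ℝ) ≤ u ^ (q-1) := Real.rpow_nonneg hu0.le _
    have h2 : (0:ℝ) ≤ (1+u) ^ s := Real.rpow_nonneg (by linarith) s
    rw [Real.norm_eq_abs, abs_of_nonneg (mul_nonneg h2 h3), Real.rpow_add hu0]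
    exact mul_le_mul_of_nonneg_right h1 h3

/-- Main term limit. -/
lemma tendsto_rpow_mul_Ik_main (hq : 0 < q) (hlm : 0 < lm) (hlp : 0 < lp)
    {s α : ℝ} (hα : 0 < α) (hsα : s + q = -α) :
    Tendsto (fun x : ℝ => x ^ α * Ik lp q lm s x) (𝓝[>] (0:ℝ))
      (𝓝 (∫ u in Ioi (0:ℝ), (1+u) ^ s * u ^ (q-1))) := by
  have hbeta := integrableOn_beta hq hα hsα
  have hDCT : Tendsto (fun x : ℝ => ∫ u in Ioi (0:ℝ),
      ((1+u) ^ s * u ^ (q-1)) * Real.exp (-((lp*(1+u)+lm*u)*x))) (𝓝[>] (0:ℝ))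
      (𝓝 (∫ u in Ioi (0:ℝ), (1+u) ^ s * u ^ (q-1))) := by
    refine tendsto_integral_filter_of_dominated_convergence
      (fun u => (1+u) ^ s * u ^ (q-1)) ?_ ?_ hbeta ?_
    · filter_upwards [self_mem_nhdsWithin] with x hx
      refine ContinuousOn.aestronglyMeasurable ?_ measurableSet_Ioi
      refine ContinuousOn.mul ((contOn_shift_rpow zero_le_one s).mul ?_) ?_
      · intro y hy
        exact (Real.continuousAt_rpow_const _ _ (Or.inl (mem_Ioi.mp hy).ne')).continuousWithinAt
      · exact (Real.continuous_exp.comp (by continuity)).continuousOn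
    · filter_upwards [self_mem_nhdsWithin] with x hx
      filter_upwards [ae_restrict_mem measurableSet_Ioi] with u hu
      have hu0 : (0:ℝ) < u := hu
      have h2 : (0:ℝ) ≤ (1+u) ^ s := Real.rpow_nonneg (by linarith) s
      have h3 : (0:ℝ) ≤ u ^ (q-1) := Real.rpow_nonneg hu0.le _
      have hexp : Real.exp (-((lp*(1+u)+lm*u)*x)) ≤ 1 := by
        rw [Real.exp_le_one_iff]
        have hx0 : (0:ℝ) < x := hx
        have h4 : (0:ℝ) < lp*(1+u) := by nlinarith
        have h5 : (0:ℝ) < lm*u := mul_pos hlm hu0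
        nlinarith [mul_pos (add_pos h4 h5) hx0]
      rw [Real.norm_eq_abs, abs_of_nonneg (by positivity)]
      nlinarith [mul_nonneg h2 h3]
    · filter_upwards [ae_restrict_mem measurableSet_Ioi] with u hu
      have : Tendsto (fun x : ℝ => Real.exp (-((lp*(1+u)+lm*u)*x))) (𝓝[>] (0:ℝ))
          (𝓝 1) := by
        have hcont : Continuous (fun x : ℝ => Real.exp (-((lp*(1+u)+lm*u)*x))) := by
          continuity
        have := hcont.tendsto 0
        simp only [mul_zero, neg_zero, Real.exp_zero] at this
        exact this.mono_left nhdsWithin_le_nhds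
      simpa using (tendsto_const_nhds (x := ((1+u) ^ s * u ^ (q-1)))).mul this
  refine hDCT.congr' ?_
  filter_upwards [self_mem_nhdsWithin] with x hx
  exact (rpow_mul_Ik_eq hq hx hsα).symm

lemma beta_interval (a b : ℝ) (ha : 0 < a) (hb : 0 < b) :
    Real.Gamma a * Real.Gamma b
      = Real.Gamma (a+b) * ∫ x in (0:ℝ)..1, x^(a-1) * (1-x)^(b-1) := by
  have h := Complex.Gamma_mul_Gamma_eq_betaIntegral (s := (a:ℂ)) (t := (b:ℂ))
    (by simpa using ha) (by simpa using hb)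
  rw [Complex.betaIntegral] at h
  have hconv : (∫ x:ℝ in (0:ℝ)..1, (x:ℂ) ^ ((a:ℂ)-1) * (1-(x:ℂ)) ^ ((b:ℂ)-1))
      = ((∫ x in (0:ℝ)..1, x^(a-1) * (1-x)^(b-1) : ℝ) : ℂ) := by
    rw [← intervalIntegral.integral_ofReal]
    refine intervalIntegral.integral_congr (fun x hx => ?_)
    rw [Set.uIcc_of_le zero_le_one] at hx
    obtain ⟨hx0, hx1⟩ := hx
    have e1 : ((x^(a-1) : ℝ) : ℂ) = (x:ℂ) ^ ((a:ℂ)-1) := by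
      rw [Complex.ofReal_cpow hx0]; push_cast; rfl
    have e2 : (((1-x)^(b-1) : ℝ) : ℂ) = (1-(x:ℂ)) ^ ((b:ℂ)-1) := by
      rw [Complex.ofReal_cpow (by linarith)]; push_cast; rfl
    push_cast
    rw [e1, e2]
  rw [hconv, ← Complex.ofReal_add, Complex.Gamma_ofReal, Complex.Gamma_ofReal,
    Complex.Gamma_ofReal, ← Complex.ofReal_mul, ← Complex.ofReal_mul] at h
  exact_mod_cast h

lemma beta_Ioi (a b : ℝ) (ha : 0 < a) (hb : 0 < b) :
    ∫ u in Set.Ioi (0:ℝ), (1+u)^(-(a+b)) * u^(a-1)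
      = Real.Gamma a * Real.Gamma b / Real.Gamma (a+b) := by
  have himg : (fun t : ℝ => t/(1-t)) '' Set.Ioo 0 1 = Set.Ioi 0 := by
    ext u; constructor
    · rintro ⟨t, ⟨ht0, ht1⟩, rfl⟩
      exact div_pos ht0 (by linarith)
    · intro hu
      have hu0 : (0:ℝ) < u := hu
      refine ⟨u/(1+u), ⟨div_pos hu0 (by linarith), ?_⟩, ?_⟩
      · rw [div_lt_one (by linarith)]; linarith
      · have h1u : (1:ℝ) + u ≠ 0 := by positivity
        field_simp
        ring
  have hderiv : ∀ t ∈ Set.Ioo (0:ℝ) 1,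
      HasDerivWithinAt (fun t : ℝ => t/(1-t)) (1/(1-t)^2) (Set.Ioo 0 1) t := by
    intro t ht
    have h1t : (0:ℝ) < 1 - t := by linarith [ht.2]
    have hd : HasDerivAt (fun t : ℝ => t/(1-t))
        ((1*(1-t) - t*(-1))/(1-t)^2) t := by
      exact (hasDerivAt_id t).div ((hasDerivAt_id t).const_sub 1) h1t.ne'
    have he : ((1*(1-t) - t*(-1))/(1-t)^2) = 1/(1-t)^2 := by
      congr 1; ring
    rw [he] at hd
    exact hd.hasDerivWithinAt
  have hinj : Set.InjOn (fun t : ℝ => t/(1-t)) (Set.Ioo 0 1) := by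
    intro t1 h1 t2 h2 he
    have h1t1 : (0:ℝ) < 1 - t1 := by linarith [h1.2]
    have h1t2 : (0:ℝ) < 1 - t2 := by linarith [h2.2]
    rw [div_eq_div_iff h1t1.ne' h1t2.ne'] at he
    nlinarith
  have hsub := integral_image_eq_integral_abs_deriv_smul measurableSet_Ioo hderiv hinj
    (fun u : ℝ => (1+u)^(-(a+b)) * u^(a-1))
  rw [himg] at hsub
  rw [hsub]
  have hcong : ∀ t ∈ Set.Ioo (0:ℝ) 1,
      |1/(1-t)^2| • ((1 + t/(1-t))^(-(a+b)) * (t/(1-t))^(a-1))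
        = t^(a-1) * (1-t)^(b-1) := by
    intro t ht
    have ht0 : (0:ℝ) < t := ht.1
    have h1t : (0:ℝ) < 1 - t := by linarith [ht.2]
    have e1 : 1 + t/(1-t) = (1-t)⁻¹ := by field_simp; ring
    have e2 : ((1-t)⁻¹)^(-(a+b)) = (1-t)^(a+b) := by
      rw [Real.inv_rpow h1t.le, Real.rpow_neg h1t.le, inv_inv]
    have e3 : (t/(1-t))^(a-1) = t^(a-1)/(1-t)^(a-1) := Real.div_rpow ht0.le h1t.le _
    have enp : ((1-t)^2 : ℝ) = (1-t)^((2:ℕ):ℝ) := by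
      rw [Real.rpow_natCast]
    have key : (1-t)^(a+b) / ((1-t)^(((2:ℕ)):ℝ) * (1-t)^(a-1)) = (1-t)^(b-1) := by
      rw [← Real.rpow_add h1t, ← Real.rpow_sub h1t]
      norm_num
      congr 1; ring
    rw [smul_eq_mul, abs_of_pos (by positivity), e1, e2, e3, enp]
    calc 1/(1-t)^((2:ℕ):ℝ) * ((1-t)^(a+b) * (t^(a-1)/(1-t)^(a-1)))
        = t^(a-1) * ((1-t)^(a+b) / ((1-t)^((2:ℕ):ℝ) * (1-t)^(a-1))) := by ring
      _ = t^(a-1) * (1-t)^(b-1) := by rw [key]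
  rw [setIntegral_congr_fun measurableSet_Ioo hcong]
  have hioo : ∫ t in Set.Ioo (0:ℝ) 1, t^(a-1) * (1-t)^(b-1)
      = ∫ t in (0:ℝ)..1, t^(a-1) * (1-t)^(b-1) := by
    rw [intervalIntegral.integral_of_le zero_le_one, integral_Ioc_eq_integral_Ioo]
  rw [hioo]
  have hG : Real.Gamma (a+b) ≠ 0 := (Real.Gamma_pos_of_pos (by linarith)).ne'
  rw [beta_interval a b ha hb]
  field_simp

lemma Gamma_prod (p : ℝ) (hint : ∀ n : ℤ, p ≠ n) :
    ∀ N : ℕ, Real.Gamma p = (∏ j ∈ Finset.range N, (p-1-j)) * Real.Gamma (p - N) := by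
  intro N
  induction N with
  | zero => simp
  | succ N ih =>
    rw [ih, Finset.prod_range_succ]
    have h0 : p - ((N:ℝ)+1) ≠ 0 := by
      intro h
      exact hint ((N:ℤ)+1) (by push_cast; linarith)
    have h := Real.Gamma_add_one h0
    have e : p - ((N:ℝ)+1) + 1 = p - N := by ring
    rw [e] at h
    rw [h]
    push_cast
    ring

lemma sin_shift (x : ℝ) (N : ℕ) :
    Real.sin (Real.pi*(x - N)) = (-1)^N * Real.sin (x*Real.pi) := by
  have h := Real.sin_add_int_mul_pi (x*Real.pi) (-(N:ℤ))
  have e : x*Real.pi + (((-(N:ℤ)):ℤ):ℝ)*Real.pi = Real.pi*(x-N) := by push_cast; ring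
  rw [e] at h
  rw [h]
  congr 1
  rw [zpow_neg, zpow_natCast]
  rcases Nat.even_or_odd N with h | h
  · rw [h.neg_one_pow]; norm_num
  · rw [h.neg_one_pow]; norm_num

lemma const_identity (p q lp lm : ℝ) (N : ℕ) (hq : 0 < q)
    (hpint : ∀ n : ℤ, p ≠ n) (hGpqN : Real.Gamma (p+q-N) ≠ 0)
    (hsinp : Real.sin (p*Real.pi) ≠ 0) (hsinpq : Real.sin ((p+q)*Real.pi) ≠ 0)
    (α : ℝ) (hα : α = (N:ℝ)+1-p-q) :
    (lp^p * lm^q / (Real.Gamma p * Real.Gamma q))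
        * ((∏ j ∈ Finset.range N, (p-1-(j:ℕ))) * (Real.Gamma q * Real.Gamma α / Real.Gamma (q+α)))
      = lp^p * lm^q * Real.sin (p*Real.pi) / (Real.Gamma (p+q-N) * Real.sin ((p+q)*Real.pi)) := by
  have hπ : Real.pi ≠ 0 := Real.pi_ne_zero
  have hGq : Real.Gamma q ≠ 0 := (Real.Gamma_pos_of_pos hq).ne'
  have hGpN : Real.Gamma (p - N) ≠ 0 := by
    refine Real.Gamma_ne_zero (fun m => ?_)
    intro h
    exact hpint ((N:ℤ) - m) (by push_cast; linarith)
  have hA : (∏ j ∈ Finset.range N, (p-1-(j:ℕ))) ≠ 0 := by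
    refine Finset.prod_ne_zero_iff.mpr (fun j _ => ?_)
    intro h
    exact hpint ((j:ℤ)+1) (by push_cast; linarith)
  have hs1 : Real.sin (Real.pi*(p-N)) ≠ 0 := by
    rw [sin_shift]
    exact mul_ne_zero (pow_ne_zero _ (by norm_num)) hsinp
  have hs2 : Real.sin (Real.pi*((p+q)-N)) ≠ 0 := by
    rw [sin_shift]
    exact mul_ne_zero (pow_ne_zero _ (by norm_num)) hsinpq
  have refl1 := Real.Gamma_mul_Gamma_one_sub (p - N)
  have refl2 := Real.Gamma_mul_Gamma_one_sub ((p+q) - N)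
  rw [eq_div_iff hs1] at refl1
  rw [eq_div_iff hs2] at refl2
  have f1 : Real.Gamma p = (∏ j ∈ Finset.range N, (p-1-(j:ℕ))) * Real.Gamma (p - N) :=
    Gamma_prod p hpint N
  have f2 : Real.Gamma (q+α) = Real.Gamma (1 - (p - N)) := by
    congr 1; rw [hα]; ring
  have f3 : Real.Gamma α = Real.Gamma (1 - ((p+q) - N)) := by
    congr 1; rw [hα]; ring
  have e2 : (p+q) - (N:ℝ) = p + q - N := by ring
  have gα : Real.Gamma α = Real.pi / (Real.sin (Real.pi*((p+q)-N)) * Real.Gamma (p+q-N)) := by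
    rw [f3, eq_div_iff (mul_ne_zero hs2 (by rw [← e2] at hGpqN; exact hGpqN))]
    rw [← e2]
    linear_combination refl2
  have gqα : Real.Gamma (q+α) = Real.pi / (Real.sin (Real.pi*(p-N)) * Real.Gamma (p - N)) := by
    rw [f2, eq_div_iff (mul_ne_zero hs1 hGpN)]
    linear_combination refl1
  rw [f1, gα, gqα, sin_shift, sin_shift]
  have hneg : ((-1:ℝ))^N ≠ 0 := pow_ne_zero _ (by norm_num)
  rw [← e2] at hGpqN
  field_simp

/-- With `N < α⁺ + α⁻ ≤ N + 1`, if neither `α⁺` nor `α⁺ + α⁻` is an integer, then with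
`α = N + 1 - α⁺ - α⁻ ∈ (0,1)` and
`C₁ = (λ⁺)^{α⁺}(λ⁻)^{α⁻} sin(α⁺π) / (Γ(α⁺+α⁻-N) sin((α⁺+α⁻)π))`
we have `C₁ ≠ 0` and `f^{(N)}(x) ~ C₁ / x^α` as `x ↓ 0`. -/
theorem bilateralGammaDensity_iteratedDeriv_asymp_at_zero (ap lp am lm : ℝ)
    (hap : 0 < ap) (hlp : 0 < lp) (ham : 0 < am) (hlm : 0 < lm)
    (N : ℕ) (hN1 : (N : ℝ) < ap + am) (hN2 : ap + am ≤ (N : ℝ) + 1)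
    (hap_not_int : ∀ n : ℤ, ap ≠ (n : ℝ))
    (hsum_not_int : ∀ n : ℤ, ap + am ≠ (n : ℝ)) :
    ((N : ℝ) + 1 - ap - am) ∈ Ioo (0 : ℝ) 1 ∧
    lp ^ ap * lm ^ am * Real.sin (ap * Real.pi)
        / (Real.Gamma (ap + am - N) * Real.sin ((ap + am) * Real.pi)) ≠ 0 ∧
    Tendsto (fun x : ℝ =>
        x ^ ((N : ℝ) + 1 - ap - am)
          * iteratedDeriv N (bilateralGammaDensity ap lp am lm) x)
      (𝓝[>] (0 : ℝ))
      (𝓝 (lp ^ ap * lm ^ am * Real.sin (ap * Real.pi)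
        / (Real.Gamma (ap + am - N) * Real.sin ((ap + am) * Real.pi)))) := by
  have hπ : Real.pi ≠ 0 := Real.pi_ne_zero
  have hsumlt : ap + am < (N:ℝ) + 1 := by
    refine lt_of_le_of_ne hN2 (fun h => ?_)
    exact hsum_not_int ((N:ℤ)+1) (by push_cast; linarith)
  have hα0 : 0 < (N:ℝ) + 1 - ap - am := by linarith
  have hα1 : (N:ℝ) + 1 - ap - am < 1 := by linarith
  have hsinp : Real.sin (ap*Real.pi) ≠ 0 := by
    intro h
    obtain ⟨n, hn⟩ := Real.sin_eq_zero_iff.mp h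
    exact hap_not_int n (by
      have := mul_right_cancel₀ hπ (by linarith [hn] : ap * Real.pi = (n:ℝ) * Real.pi)
      linarith)
  have hsinpq : Real.sin ((ap+am)*Real.pi) ≠ 0 := by
    intro h
    obtain ⟨n, hn⟩ := Real.sin_eq_zero_iff.mp h
    exact hsum_not_int n (by
      have := mul_right_cancel₀ hπ (by linarith [hn] : (ap+am) * Real.pi = (n:ℝ) * Real.pi)
      linarith)
  have hGpqN : Real.Gamma (ap+am-N) ≠ 0 := (Real.Gamma_pos_of_pos (by linarith)).ne'
  have hC1 : lp ^ ap * lm ^ am * Real.sin (ap * Real.pi)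
      / (Real.Gamma (ap + am - N) * Real.sin ((ap + am) * Real.pi)) ≠ 0 := by
    refine div_ne_zero (mul_ne_zero (mul_ne_zero ?_ ?_) hsinp) (mul_ne_zero hGpqN hsinpq)
    · exact (Real.rpow_pos_of_pos hlp ap).ne'
    · exact (Real.rpow_pos_of_pos hlm am).ne'
  refine ⟨⟨hα0, hα1⟩, hC1, ?_⟩
  set α : ℝ := (N:ℝ) + 1 - ap - am with hαdef
  set K : ℝ := lp ^ ap * lm ^ am / (Real.Gamma ap * Real.Gamma am) with hK
  -- main limit of the k = N term
  have hBlim : Tendsto (fun x : ℝ => x ^ α * Ik lp am lm (ap-1-(N:ℝ)) x) (𝓝[>] (0:ℝ))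
      (𝓝 (Real.Gamma am * Real.Gamma α / Real.Gamma (am+α))) := by
    have h := tendsto_rpow_mul_Ik_main (lp := lp) (lm := lm) ham hlm hlp
      (s := ap-1-(N:ℝ)) (α := α) hα0 (by rw [hαdef]; ring)
    have e : (∫ u in Ioi (0:ℝ), (1+u) ^ (ap-1-(N:ℝ)) * u ^ (am-1))
        = Real.Gamma am * Real.Gamma α / Real.Gamma (am+α) := by
      rw [← beta_Ioi am α ham hα0]
      refine setIntegral_congr_fun measurableSet_Ioi (fun u hu => ?_)
      rw [show -(am+α) = ap-1-(N:ℝ) by rw [hαdef]; ring]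
    rw [e] at h
    exact h
  -- final limit value
  have hval : K * (cf ap lp N N * (Real.Gamma am * Real.Gamma α / Real.Gamma (am+α)))
      = lp ^ ap * lm ^ am * Real.sin (ap * Real.pi)
        / (Real.Gamma (ap + am - N) * Real.sin ((ap + am) * Real.pi)) := by
    rw [cf_diag, hK]
    have := const_identity ap am lp lm N ham hap_not_int hGpqN hsinp hsinpq α hαdef
    rw [this]
  rw [← hval]
  -- limits of individual terms
  set l : ℕ → ℝ := fun k =>
    if k = N then cf ap lp N N * (Real.Gamma am * Real.Gamma α / Real.Gamma (am+α)) else 0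
    with hl
  have hterm : ∀ k ∈ Finset.range (N+1),
      Tendsto (fun x : ℝ => cf ap lp N k * (x ^ α * Ik lp am lm (ap-1-(k:ℕ)) x))
        (𝓝[>] (0:ℝ)) (𝓝 (l k)) := by
    intro k hk
    rcases eq_or_ne k N with rfl | hkN
    · rw [hl]; simp only [if_pos rfl]
      exact hBlim.const_mul _
    · have hkN' : k < N := by
        have := Finset.mem_range.mp hk; omega
      rw [hl]; simp only [if_neg hkN]
      have hk1 : (k:ℝ) + 1 ≤ N := by exact_mod_cast Nat.succ_le_of_lt hkN'
      have h0 := (tendsto_rpow_mul_Ik_zero (lp := lp) (lm := lm) ham hlm hlp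
        (s := ap-1-(k:ℝ)) (α := α) (by linarith) hα0).const_mul (cf ap lp N k)
      simpa using h0
  have hsum := tendsto_finset_sum (Finset.range (N+1)) hterm
  have hsumval : (∑ k ∈ Finset.range (N+1), l k)
      = cf ap lp N N * (Real.Gamma am * Real.Gamma α / Real.Gamma (am+α)) := by
    rw [hl, Finset.sum_ite_eq' (Finset.range (N+1)) N]
    rw [if_pos (Finset.self_mem_range_succ N)]
  rw [hsumval] at hsum
  have hfinal := hsum.const_mul K
  refine hfinal.congr' ?_
  filter_upwards [self_mem_nhdsWithin] with x hx
  have hx0 : (0:ℝ) < x := hx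
  rw [iteratedDeriv_f_eq hap ham hlm hlp N x hx0, Sk]
  rw [Finset.mul_sum, Finset.mul_sum, Finset.mul_sum]
  refine Finset.sum_congr rfl (fun k _ => ?_)
  ring
end

section
/- For all α⁺, λ⁺, α⁻, λ⁻ > 0, the bilateral Gamma density f has the asymptotic behaviour f(x) ~ C₃ x^{α⁺−1} e^{−λ⁺x} as x → ∞ and f(x) ~ C₄ |x|^{α⁻−1} e^{−λ⁻|x|} as x → −∞; that is, f(x)/(x^{α⁺−1} e^{−λ⁺x}) → C₃ as x → ∞ and f(x)/(|x|^{α⁻−1} e^{−λ⁻|x|}) → C₄ as x → −∞, where C₃ = (λ⁺)^{α⁺}(λ⁻)^{α⁻}/((λ⁺+λ⁻)^{α⁻} Γ(α⁺)) and C₄ = (λ⁺)^{α⁺}(λ⁻)^{α⁻}/((λ⁺+λ⁻)^{α⁺} Γ(α⁻)). In particular, ln f(x)/x → −λ⁺ as x → ∞ and ln f(x)/x → λ⁻ as x → −∞. -/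
open MeasureTheory Filter Set Topology

lemma aux_cont (q c : ℝ) (hc : 0 < c) :
    ContinuousOn (fun y : ℝ => y ^ (q - 1) * Real.exp (-c * y)) (Ioi 0) := by
  apply ContinuousOn.mul
  · exact fun y hy => (Real.continuousAt_rpow_const y _ (Or.inl (ne_of_gt hy))).continuousWithinAt
  · exact (Real.continuous_exp.comp (continuous_const.mul continuous_id)).continuousOn

-- integrability of the dominating function
lemma aux_integrable (p s c : ℝ) (hs : 0 < s) (hc : 0 < c) :
    IntegrableOn (fun y : ℝ => (1 + y) ^ |p| * (y ^ (s - 1) * Real.exp (-c * y)))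
      (Ioi 0) := by
  have hmeas : ContinuousOn (fun y : ℝ => (1 + y) ^ |p| * (y ^ (s - 1) * Real.exp (-c * y)))
      (Ioi 0) := by
    apply ContinuousOn.mul
    · apply ContinuousOn.rpow_const (by fun_prop)
      intro y hy
      exact Or.inl (by simp only [mem_Ioi] at hy; positivity)
    · exact aux_cont s c hc
  have h1 : IntegrableOn (fun y : ℝ => (1 + y) ^ |p| * (y ^ (s - 1) * Real.exp (-c * y)))
      (Ioc (0:ℝ) 1) := by
    have hi : IntegrableOn (fun y : ℝ => y ^ (s - 1)) (Ioc (0:ℝ) 1) := by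
      have := (intervalIntegral.intervalIntegrable_rpow' (a := 0) (b := 1) (r := s - 1)
        (by linarith))
      rwa [intervalIntegrable_iff_integrableOn_Ioc_of_le zero_le_one] at this
    apply Integrable.mono' (hi.const_mul (2 ^ |p|))
    · exact (hmeas.mono Ioc_subset_Ioi_self).aestronglyMeasurable measurableSet_Ioc
    · filter_upwards [ae_restrict_mem measurableSet_Ioc] with y hy
      obtain ⟨hy0, hy1⟩ := hy
      rw [Real.norm_eq_abs, abs_of_nonneg (show (0:ℝ) ≤ _ by positivity)]
      have hb1 : (1 + y) ^ |p| ≤ 2 ^ |p| :=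
        Real.rpow_le_rpow (by linarith) (by linarith) (abs_nonneg p)
      have hb2 : y ^ (s - 1) * Real.exp (-c * y) ≤ y ^ (s - 1) * 1 := by
        apply mul_le_mul_of_nonneg_left _ (by positivity)
        exact Real.exp_le_one_iff.mpr (by nlinarith)
      nlinarith [Real.rpow_nonneg (le_of_lt hy0) (s-1), Real.rpow_nonneg (by linarith : (0:ℝ) ≤ 1 + y) |p|, Real.exp_pos (-c*y), Real.rpow_nonneg (by norm_num : (0:ℝ) ≤ 2) |p|]
  have h2 : IntegrableOn (fun y : ℝ => (1 + y) ^ |p| * (y ^ (s - 1) * Real.exp (-c * y)))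
      (Ioi (1:ℝ)) := by
    have hi : IntegrableOn (fun y : ℝ => 2 ^ |p| * (y ^ (|p| + s - 1) * Real.exp (-c * y)))
        (Ioi (0:ℝ)) := by
      apply Integrable.const_mul
      have := integrableOn_rpow_mul_exp_neg_mul_rpow (p := 1) (s := |p| + s - 1) (b := c)
        (by have := abs_nonneg p; linarith) one_pos hc
      apply this.congr_fun _ measurableSet_Ioi
      intro y hy
      simp [Real.rpow_one]
    apply Integrable.mono' (hi.mono_set (Ioi_subset_Ioi zero_le_one))
    · exact (hmeas.mono (Ioi_subset_Ioi zero_le_one)).aestronglyMeasurable measurableSet_Ioi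
    · filter_upwards [ae_restrict_mem measurableSet_Ioi] with y hy
      simp only [mem_Ioi] at hy
      rw [Real.norm_eq_abs, abs_of_nonneg (show (0:ℝ) ≤ _ by positivity)]
      have hb1 : (1 + y) ^ |p| ≤ 2 ^ |p| * y ^ |p| := by
        rw [← Real.mul_rpow (by norm_num) (by linarith)]
        exact Real.rpow_le_rpow (by linarith) (by linarith) (abs_nonneg p)
      have hb2 : y ^ |p| * y ^ (s - 1) = y ^ (|p| + s - 1) := by
        rw [← Real.rpow_add (by linarith)]; ring_nf
      calc (1 + y) ^ |p| * (y ^ (s - 1) * Real.exp (-c * y))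
          ≤ 2 ^ |p| * y ^ |p| * (y ^ (s - 1) * Real.exp (-c * y)) := by
            apply mul_le_mul_of_nonneg_right hb1 (by positivity)
        _ = 2 ^ |p| * (y ^ (|p| + s - 1) * Real.exp (-c * y)) := by
            rw [← hb2]; ring
  have : Ioi (0:ℝ) = Ioc 0 1 ∪ Ioi 1 := (Ioc_union_Ioi_eq_Ioi zero_le_one).symm
  rw [this]
  exact h1.union h2

lemma aux_tendsto (p s c : ℝ) (hs : 0 < s) (hc : 0 < c) :
    Tendsto (fun x : ℝ => ∫ y in Ioi (0:ℝ), (1 + y / x) ^ p * (y ^ (s - 1) * Real.exp (-c * y)))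
      atTop (𝓝 (∫ y in Ioi (0:ℝ), y ^ (s - 1) * Real.exp (-c * y))) := by
  apply tendsto_integral_filter_of_dominated_convergence
    (fun y : ℝ => (1 + y) ^ |p| * (y ^ (s - 1) * Real.exp (-c * y)))
  · filter_upwards [eventually_ge_atTop (1:ℝ)] with x hx
    apply ContinuousOn.aestronglyMeasurable _ measurableSet_Ioi
    apply ContinuousOn.mul
    · apply ContinuousOn.rpow_const (by fun_prop)
      intro y hy
      simp only [mem_Ioi] at hy
      have : 0 < 1 + y / x := by positivity
      exact Or.inl (ne_of_gt this)
    · exact aux_cont s c hc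
  · filter_upwards [eventually_ge_atTop (1:ℝ)] with x hx
    filter_upwards [ae_restrict_mem measurableSet_Ioi] with y hy
    simp only [mem_Ioi] at hy
    have hx0 : (0:ℝ) < x := lt_of_lt_of_le one_pos hx
    rw [Real.norm_eq_abs, abs_of_nonneg (show (0:ℝ) ≤ _ by positivity)]
    have key : (1 + y / x) ^ p ≤ (1 + y) ^ |p| := by
      have h1 : (1:ℝ) ≤ 1 + y / x := by nlinarith [div_nonneg hy.le hx0.le]
      have h2 : 1 + y / x ≤ 1 + y := by
        have : y / x ≤ y := by
          rw [div_le_iff₀ hx0]; nlinarith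
        linarith
      rcases le_or_gt 0 p with hp | hp
      · rw [abs_of_nonneg hp]
        exact Real.rpow_le_rpow (by linarith) h2 hp
      · calc (1 + y / x) ^ p ≤ 1 := Real.rpow_le_one_of_one_le_of_nonpos h1 hp.le
          _ ≤ (1 + y) ^ |p| := Real.one_le_rpow (by linarith) (abs_nonneg p)
    exact mul_le_mul_of_nonneg_right key (by positivity)
  · exact aux_integrable p s c hs hc
  · filter_upwards [ae_restrict_mem measurableSet_Ioi] with y hy
    simp only [mem_Ioi] at hy
    have h1 : Tendsto (fun x : ℝ => 1 + y / x) atTop (𝓝 1) := by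
      have := tendsto_const_nhds (α := ℝ) (x := y) |>.div_atTop tendsto_id
      simpa using tendsto_const_nhds.add this
    have h2 : Tendsto (fun x : ℝ => (1 + y / x) ^ p) atTop (𝓝 1) := by
      have hcont : ContinuousAt (fun t : ℝ => t ^ p) 1 :=
        Real.continuousAt_rpow_const 1 p (Or.inl one_ne_zero)
      have := hcont.tendsto.comp h1
      simpa [Function.comp_def] using this
    simpa using h2.mul_const _

lemma aux_ratio (ap lp am lm : ℝ) (x : ℝ) (hx : 0 < x) :
    bilateralGammaDensity ap lp am lm x / (x ^ (ap - 1) * Real.exp (-lp * x)) =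
      (lp ^ ap * lm ^ am / (Real.Gamma ap * Real.Gamma am)) *
        ∫ y in Ioi (0:ℝ), (1 + y / x) ^ (ap - 1) *
          (y ^ (am - 1) * Real.exp (-(lp + lm) * y)) := by
  have key : bilateralGammaDensity ap lp am lm x =
      ((lp ^ ap * lm ^ am / (Real.Gamma ap * Real.Gamma am)) *
        (x ^ (ap - 1) * Real.exp (-lp * x))) *
        ∫ y in Ioi (0:ℝ), (1 + y / x) ^ (ap - 1) *
          (y ^ (am - 1) * Real.exp (-(lp + lm) * y)) := by
    rw [bilateralGammaDensity, ← integral_const_mul]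
    apply setIntegral_congr_fun measurableSet_Ioi
    intro y hy
    simp only [mem_Ioi] at hy
    simp only [gammaDensity, if_pos (show 0 < x + y by linarith), if_pos hy]
    have e1 : (x + y) ^ (ap - 1) = x ^ (ap - 1) * (1 + y / x) ^ (ap - 1) := by
      rw [← Real.mul_rpow hx.le (by positivity)]
      congr 1
      field_simp
    have e2 : Real.exp (-lp * (x + y)) = Real.exp (-lp * x) * Real.exp (-lp * y) := by
      rw [← Real.exp_add]; ring_nf
    have e3 : Real.exp (-(lp + lm) * y) = Real.exp (-lp * y) * Real.exp (-lm * y) := by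
      rw [← Real.exp_add]; ring_nf
    rw [e1, e2, e3]
    ring
  have hD : x ^ (ap - 1) * Real.exp (-lp * x) ≠ 0 := by positivity
  rw [key, show ∀ K D I : ℝ, (K * D) * I = D * (K * I) from fun K D I => by ring]
  exact mul_div_cancel_left₀ _ hD

lemma aux_top (ap lp am lm : ℝ) (hap : 0 < ap) (hlp : 0 < lp) (ham : 0 < am) (hlm : 0 < lm) :
    Tendsto (fun x : ℝ =>
        bilateralGammaDensity ap lp am lm x / (x ^ (ap - 1) * Real.exp (-lp * x)))
      atTop (𝓝 (lp ^ ap * lm ^ am / ((lp + lm) ^ am * Real.Gamma ap))) := by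
  have hc : (0:ℝ) < lp + lm := by linarith
  have hI := aux_tendsto (ap - 1) am (lp + lm) ham hc
  have hval : (∫ y in Ioi (0:ℝ), y ^ (am - 1) * Real.exp (-(lp + lm) * y)) =
      (1 / (lp + lm)) ^ am * Real.Gamma am := by
    rw [← Real.integral_rpow_mul_exp_neg_mul_Ioi ham hc]
    apply setIntegral_congr_fun measurableSet_Ioi
    intro y _
    simp only [neg_mul]
  rw [hval] at hI
  have hK := hI.const_mul (lp ^ ap * lm ^ am / (Real.Gamma ap * Real.Gamma am))
  have heq : (lp ^ ap * lm ^ am / (Real.Gamma ap * Real.Gamma am)) *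
      ((1 / (lp + lm)) ^ am * Real.Gamma am) =
      lp ^ ap * lm ^ am / ((lp + lm) ^ am * Real.Gamma ap) := by
    rw [Real.div_rpow zero_le_one hc.le, Real.one_rpow]
    have h1 : Real.Gamma ap ≠ 0 := ne_of_gt (Real.Gamma_pos_of_pos hap)
    have h2 : Real.Gamma am ≠ 0 := ne_of_gt (Real.Gamma_pos_of_pos ham)
    have h3 : (lp + lm) ^ am ≠ 0 := by positivity
    field_simp
  rw [heq] at hK
  apply hK.congr'
  filter_upwards [eventually_gt_atTop (0:ℝ)] with x hx
  exact (aux_ratio ap lp am lm x hx).symm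

lemma aux_reflect (ap lp am lm x : ℝ) :
    bilateralGammaDensity ap lp am lm x = bilateralGammaDensity am lm ap lp (-x) := by
  unfold bilateralGammaDensity
  have e1 : (Ioi (0:ℝ)).indicator
      (fun y => gammaDensity ap lp (x + y) * gammaDensity am lm y) =
      fun y => gammaDensity ap lp (x + y) * gammaDensity am lm y := by
    funext y
    by_cases hy : 0 < y
    · rw [indicator_of_mem (mem_Ioi.mpr hy)]
    · rw [indicator_of_notMem (by simpa using hy)]
      simp [gammaDensity, hy]
  have e2 : (Ioi (0:ℝ)).indicator
      (fun y => gammaDensity am lm (-x + y) * gammaDensity ap lp y) =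
      fun y => gammaDensity am lm (-x + y) * gammaDensity ap lp y := by
    funext y
    by_cases hy : 0 < y
    · rw [indicator_of_mem (mem_Ioi.mpr hy)]
    · rw [indicator_of_notMem (by simpa using hy)]
      simp [gammaDensity, hy]
  rw [← integral_indicator measurableSet_Ioi, e1,
    ← integral_add_right_eq_self (fun y => gammaDensity ap lp (x + y) * gammaDensity am lm y)
      (-x),
    ← integral_indicator measurableSet_Ioi, e2]
  congr 1
  funext y
  have : x + (y + -x) = y := by ring
  rw [this, mul_comm]
  congr 1
  ring_nf

lemma aux_bot (ap lp am lm : ℝ) (hap : 0 < ap) (hlp : 0 < lp) (ham : 0 < am) (hlm : 0 < lm) :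
    Tendsto (fun x : ℝ =>
        bilateralGammaDensity ap lp am lm x / (|x| ^ (am - 1) * Real.exp (-lm * |x|)))
      atBot (𝓝 (lp ^ ap * lm ^ am / ((lp + lm) ^ ap * Real.Gamma am))) := by
  have h := (aux_top am lm ap lp ham hlm hap hlp).comp tendsto_neg_atBot_atTop
  have hceq : lm ^ am * lp ^ ap / ((lm + lp) ^ ap * Real.Gamma am) =
      lp ^ ap * lm ^ am / ((lp + lm) ^ ap * Real.Gamma am) := by
    rw [mul_comm (lm ^ am), add_comm lm lp]
  rw [hceq] at h
  apply h.congr'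
  filter_upwards [eventually_lt_atBot (0:ℝ)] with x hx
  have habs : |x| = -x := abs_of_neg hx
  simp only [Function.comp_apply, habs]
  rw [aux_reflect ap lp am lm x]

lemma log_div_tendsto_zero_atTop : Tendsto (fun x : ℝ => Real.log x / x) atTop (𝓝 0) :=
  Real.isLittleO_log_id_atTop.tendsto_div_nhds_zero

theorem bilateralGammaDensity_asymptotics' (ap lp am lm : ℝ)
    (hap : 0 < ap) (hlp : 0 < lp) (ham : 0 < am) (hlm : 0 < lm) :
    Tendsto (fun x : ℝ =>
        bilateralGammaDensity ap lp am lm x / (x ^ (ap - 1) * Real.exp (-lp * x)))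
      atTop (𝓝 (lp ^ ap * lm ^ am / ((lp + lm) ^ am * Real.Gamma ap))) ∧
    Tendsto (fun x : ℝ =>
        bilateralGammaDensity ap lp am lm x / (|x| ^ (am - 1) * Real.exp (-lm * |x|)))
      atBot (𝓝 (lp ^ ap * lm ^ am / ((lp + lm) ^ ap * Real.Gamma am))) ∧
    Tendsto (fun x : ℝ => Real.log (bilateralGammaDensity ap lp am lm x) / x)
      atTop (𝓝 (-lp)) ∧
    Tendsto (fun x : ℝ => Real.log (bilateralGammaDensity ap lp am lm x) / x)
      atBot (𝓝 lm) := by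
  have htop := aux_top ap lp am lm hap hlp ham hlm
  have hbot := aux_bot ap lp am lm hap hlp ham hlm
  set C3 := lp ^ ap * lm ^ am / ((lp + lm) ^ am * Real.Gamma ap) with hC3
  set C4 := lp ^ ap * lm ^ am / ((lp + lm) ^ ap * Real.Gamma am) with hC4
  have hC3pos : 0 < C3 := by
    have := Real.Gamma_pos_of_pos hap
    rw [hC3]; positivity
  have hC4pos : 0 < C4 := by
    have := Real.Gamma_pos_of_pos ham
    rw [hC4]; positivity
  refine ⟨htop, hbot, ?_, ?_⟩
  · -- log at atTop
    have h1 : Tendsto (fun x : ℝ => Real.log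
        (bilateralGammaDensity ap lp am lm x / (x ^ (ap - 1) * Real.exp (-lp * x))))
        atTop (𝓝 (Real.log C3)) :=
      ((Real.continuousAt_log (ne_of_gt hC3pos)).tendsto.comp htop)
    have h2 := h1.div_atTop tendsto_id
    have h3 := log_div_tendsto_zero_atTop
    have hsum : Tendsto (fun x : ℝ =>
        Real.log (bilateralGammaDensity ap lp am lm x / (x ^ (ap - 1) * Real.exp (-lp * x))) / x
          + ((ap - 1) * (Real.log x / x) + -lp)) atTop (𝓝 (0 + ((ap - 1) * 0 + -lp))) :=
      h2.add ((h3.const_mul (ap - 1)).add_const (-lp))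
    rw [zero_add, mul_zero, zero_add] at hsum
    apply hsum.congr'
    filter_upwards [eventually_ge_atTop (1:ℝ),
      htop.eventually (eventually_gt_nhds hC3pos)] with x hx1 hr
    have hx0 : 0 < x := lt_of_lt_of_le one_pos hx1
    have hD : x ^ (ap - 1) * Real.exp (-lp * x) ≠ 0 := by positivity
    have hf : bilateralGammaDensity ap lp am lm x =
        (bilateralGammaDensity ap lp am lm x / (x ^ (ap - 1) * Real.exp (-lp * x))) *
          (x ^ (ap - 1) * Real.exp (-lp * x)) := (div_mul_cancel₀ _ hD).symm
    rw [hf, Real.log_mul (ne_of_gt hr) hD,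
      Real.log_mul (by positivity) (Real.exp_ne_zero _), Real.log_rpow hx0, Real.log_exp]
    field_simp
  · -- log at atBot
    have h1 : Tendsto (fun x : ℝ => Real.log
        (bilateralGammaDensity ap lp am lm x / (|x| ^ (am - 1) * Real.exp (-lm * |x|))))
        atBot (𝓝 (Real.log C4)) :=
      ((Real.continuousAt_log (ne_of_gt hC4pos)).tendsto.comp hbot)
    have h2 : Tendsto (fun x : ℝ => Real.log
        (bilateralGammaDensity ap lp am lm x / (|x| ^ (am - 1) * Real.exp (-lm * |x|))) / x)
        atBot (𝓝 0) := by
      have h := (h1.div_atTop tendsto_neg_atBot_atTop).neg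
      rw [neg_zero] at h
      exact h.congr fun x => by rw [div_neg, neg_neg]
    have h3 : Tendsto (fun x : ℝ => Real.log (-x) / x) atBot (𝓝 0) := by
      have h := (log_div_tendsto_zero_atTop.comp tendsto_neg_atBot_atTop).neg
      rw [neg_zero] at h
      exact h.congr fun x => by simp only [Function.comp_apply]; rw [div_neg, neg_neg]
    have hsum : Tendsto (fun x : ℝ =>
        Real.log (bilateralGammaDensity ap lp am lm x /
          (|x| ^ (am - 1) * Real.exp (-lm * |x|))) / x
          + ((am - 1) * (Real.log (-x) / x) + lm)) atBot (𝓝 (0 + ((am - 1) * 0 + lm))) :=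
      h2.add ((h3.const_mul (am - 1)).add_const lm)
    rw [zero_add, mul_zero, zero_add] at hsum
    apply hsum.congr'
    filter_upwards [eventually_le_atBot (-1:ℝ),
      hbot.eventually (eventually_gt_nhds hC4pos)] with x hx1 hr
    have hx0 : x < 0 := lt_of_le_of_lt hx1 (by norm_num)
    have habs : |x| = -x := abs_of_neg hx0
    have hnx : 0 < -x := neg_pos.mpr hx0
    have hD : |x| ^ (am - 1) * Real.exp (-lm * |x|) ≠ 0 := by
      rw [habs]; positivity
    have hf : bilateralGammaDensity ap lp am lm x =
        (bilateralGammaDensity ap lp am lm x / (|x| ^ (am - 1) * Real.exp (-lm * |x|))) *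
          (|x| ^ (am - 1) * Real.exp (-lm * |x|)) := (div_mul_cancel₀ _ hD).symm
    rw [hf, Real.log_mul (ne_of_gt hr) hD, habs,
      Real.log_mul (by positivity) (Real.exp_ne_zero _), Real.log_rpow hnx, Real.log_exp]
    have hxne : x ≠ 0 := ne_of_lt hx0
    field_simp

/-- Asymptotic behaviour of the bilateral Gamma density at `±∞`:
`f(x) ~ C₃ x^{α⁺-1} e^{-λ⁺x}` as `x → ∞` and `f(x) ~ C₄ |x|^{α⁻-1} e^{-λ⁻|x|}` as
`x → -∞`; consequently `ln f(x)/x → -λ⁺` as `x → ∞` and `ln f(x)/x → λ⁻` as `x → -∞`. -/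
theorem bilateralGammaDensity_asymptotics (ap lp am lm : ℝ)
    (hap : 0 < ap) (hlp : 0 < lp) (ham : 0 < am) (hlm : 0 < lm) :
    Tendsto (fun x : ℝ =>
        bilateralGammaDensity ap lp am lm x / (x ^ (ap - 1) * Real.exp (-lp * x)))
      atTop (𝓝 (lp ^ ap * lm ^ am / ((lp + lm) ^ am * Real.Gamma ap))) ∧
    Tendsto (fun x : ℝ =>
        bilateralGammaDensity ap lp am lm x / (|x| ^ (am - 1) * Real.exp (-lm * |x|)))
      atBot (𝓝 (lp ^ ap * lm ^ am / ((lp + lm) ^ ap * Real.Gamma am))) ∧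
    Tendsto (fun x : ℝ => Real.log (bilateralGammaDensity ap lp am lm x) / x)
      atTop (𝓝 (-lp)) ∧
    Tendsto (fun x : ℝ => Real.log (bilateralGammaDensity ap lp am lm x) / x)
      atBot (𝓝 lm) := by
  exact bilateralGammaDensity_asymptotics' ap lp am lm hap hlp ham hlm
end
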